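/- Let Ω ⊆ ℂ be open, let a, b, U be smooth real-valued functions and h a smooth positive real-valued function on Ω, with covariant derivatives ∇, ∇̄ and magnetic field B = h²(∂ₓb - ∂_y a). Assume W := U - B is nonvanishing on Ω, and define the new covariant derivative ∇̃φ = ∇φ - (∂W/W)φ + 2(∂h/h)φ. If ψ : Ω → ℂ is smooth and satisfies the Schrödinger equation -4h²∇̄(∇ψ) + Wψ = 0, then its Laplace transform ψ̃ := ∇ψ satisfies -4h²∇̃(∇̄ψ̃) + Wψ̃ = 0. -/

import Mathlib

/-! The zero-mode equation says `4h²·∇̄ψ̃ = Wψ` on the open set `Ω`, so it may be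
differentiated: by the Leibniz rule, `8h ∂h·∇̄ψ̃ + 4h²·∂(∇̄ψ̃) = ∂(Wψ)`. In
`-4h²·∇̃∇̄ψ̃ + W·∇ψ`, substituting `4h²∇̄ψ̃ = Wψ` makes the two gauge terms `-iA` cancel,
and the correction `-∂W/W + 2∂h/h` (the logarithmic derivative of `h²/W`) is exactly what
makes `4h²·(∂ - ∂W/W + 2∂h/h)∇̄ψ̃ = ∂(Wψ) - ∂W·ψ = W·∂ψ`. -/

open Complex ComplexConjugate MeasureTheory

noncomputable section

/-- Partial derivative in the x-direction (identifying ℂ with ℝ²). -/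
def pdx (f : ℂ → ℂ) (z : ℂ) : ℂ := fderiv ℝ f z 1

/-- Partial derivative in the y-direction. -/
def pdy (f : ℂ → ℂ) (z : ℂ) : ℂ := fderiv ℝ f z Complex.I

/-- Wirtinger derivative ∂ = (∂ₓ - i ∂_y)/2. -/
def wd (f : ℂ → ℂ) (z : ℂ) : ℂ := (pdx f z - Complex.I * pdy f z) / 2

/-- Wirtinger derivative ∂̄ = (∂ₓ + i ∂_y)/2. -/
def wdb (f : ℂ → ℂ) (z : ℂ) : ℂ := (pdx f z + Complex.I * pdy f z) / 2

/-- x-derivative of a real-valued function. -/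
def pdxR (f : ℂ → ℝ) (z : ℂ) : ℝ := fderiv ℝ f z 1

/-- y-derivative of a real-valued function. -/
def pdyR (f : ℂ → ℝ) (z : ℂ) : ℝ := fderiv ℝ f z Complex.I

/-- Magnetic field B = h²(∂ₓ b - ∂_y a). -/
def Bf (a b h : ℂ → ℝ) (z : ℂ) : ℝ := (h z)^2 * (pdxR b z - pdyR a z)

/-- Covariant derivative ∇ψ = ∂ψ - iAψ with A = (a - ib)/2. -/
def cd (a b : ℂ → ℝ) (ψ : ℂ → ℂ) (z : ℂ) : ℂ :=
  wd ψ z - Complex.I * (((a z : ℂ) - Complex.I * (b z : ℂ)) / 2) * ψ z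

/-- Covariant derivative ∇̄ψ = ∂̄ψ - iĀψ with Ā = (a + ib)/2. -/
def cdb (a b : ℂ → ℝ) (ψ : ℂ → ℂ) (z : ℂ) : ℂ :=
  wdb ψ z - Complex.I * (((a z : ℂ) + Complex.I * (b z : ℂ)) / 2) * ψ z

open Filter Topology

section Wirtinger

variable {f g : ℂ → ℂ} {z : ℂ}

theorem HasFDerivAt.wd_eq {L : ℂ →L[ℝ] ℂ} (hf : HasFDerivAt f L z) :
    wd f z = (L 1 - I * L I) / 2 := by
  rw [wd, pdx, pdy, hf.fderiv]

theorem Filter.EventuallyEq.wd_eq (hfg : f =ᶠ[𝓝 z] g) : wd f z = wd g z := by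
  rw [wd, wd, pdx, pdx, pdy, pdy, hfg.fderiv_eq]

theorem wd_mul (hf : DifferentiableAt ℝ f z) (hg : DifferentiableAt ℝ g z) :
    wd (fun w => f w * g w) z = wd f z * g z + f z * wd g z := by
  rw [(hf.hasFDerivAt.fun_mul hg.hasFDerivAt).wd_eq, hf.hasFDerivAt.wd_eq, hg.hasFDerivAt.wd_eq]
  simp only [add_apply, smul_apply, smul_eq_mul]
  ring

theorem wd_const_mul_pow (c : ℂ) (n : ℕ) (hf : DifferentiableAt ℝ f z) :
    wd (fun w => c * f w ^ n) z = c * n * f z ^ (n - 1) * wd f z := by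
  rw [((hf.hasFDerivAt.pow n).const_mul c).wd_eq, hf.hasFDerivAt.wd_eq]
  simp only [smul_apply, smul_eq_mul, nsmul_eq_mul]
  ring

end Wirtinger

theorem DifferentiableAt.ofReal_comp {f : ℂ → ℝ} {z : ℂ} (hf : DifferentiableAt ℝ f z) :
    DifferentiableAt ℝ (fun w => (f w : ℂ)) z :=
  ofRealCLM.differentiableAt.comp z hf

theorem ContDiffAt.differentiableAt_fderiv_apply {f : ℂ → ℝ} {z : ℂ} (hf : ContDiffAt ℝ 2 f z)
    (v : ℂ) : DifferentiableAt ℝ (fun w => fderiv ℝ f w v) z :=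
  ((hf.fderiv_right (m := 1) le_rfl).differentiableAt one_ne_zero).clm_apply
    (differentiableAt_const v)

theorem differentiableAt_Bf {a b h : ℂ → ℝ} {z : ℂ} (ha : ContDiffAt ℝ 2 a z)
    (hb : ContDiffAt ℝ 2 b z) (hh : DifferentiableAt ℝ h z) :
    DifferentiableAt ℝ (Bf a b h) z :=
  (hh.pow 2).mul ((hb.differentiableAt_fderiv_apply 1).sub (ha.differentiableAt_fderiv_apply I))

theorem twisted_zero_mode_of_eventuallyEq {W H φ ψ : ℂ → ℂ} {z : ℂ} (A : ℂ)
    (hW : W z ≠ 0) (hH : ∀ᶠ w in 𝓝 z, H w ≠ 0) (dW : DifferentiableAt ℝ W z)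
    (dH : DifferentiableAt ℝ H z) (dψ : DifferentiableAt ℝ ψ z)
    (hzero : (fun w => 4 * H w ^ 2 * φ w) =ᶠ[𝓝 z] fun w => W w * ψ w) :
    -4 * H z ^ 2 * (wd φ z - A * φ z - wd W z / W z * φ z + 2 * (wd H z / H z) * φ z)
      + W z * (wd ψ z - A * ψ z) = 0 := by
  have dφ : DifferentiableAt ℝ φ z := by
    have hφ : φ =ᶠ[𝓝 z] fun w => (4 * H w ^ 2)⁻¹ * (W w * ψ w) := by
      filter_upwards [hzero, hH] with w hw hHw
      rw [← hw]
      field_simp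
    refine hφ.differentiableAt_iff.2 (DifferentiableAt.mul ?_ (dW.mul dψ))
    exact ((dH.fun_pow 2).const_mul 4).inv
      (mul_ne_zero (by norm_num) (pow_ne_zero 2 hH.self_of_nhds))
  have hval := hzero.eq_of_nhds
  have hder := hzero.wd_eq
  rw [wd_mul ((dH.fun_pow 2).const_mul 4) dφ, wd_const_mul_pow 4 2 dH, wd_mul dW dψ]
    at hder
  have hW_inv : W z * (W z)⁻¹ = 1 := mul_inv_cancel₀ hW
  have hH_inv : H z * (H z)⁻¹ = 1 := mul_inv_cancel₀ hH.self_of_nhds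
  linear_combination (A + wd W z / W z) * hval - hder
    + wd W z * ψ z * hW_inv - 8 * H z * wd H z * φ z * hH_inv

/-- the Laplace transformation ψ ↦ ψ̃ = ∇ψ sends zero modes of
L = -4h²∇̄∇ + W (W = U - B nonvanishing) to zero modes of L̃ = -4h²∇̃∇̄ + W, where
∇̃φ = ∇φ - (∂W/W)φ + 2(∂h/h)φ. -/
theorem laplace_transformation_of_zero_modes
    (Ω : Set ℂ) (hΩ : IsOpen Ω) (a b U h : ℂ → ℝ)
    (ha : ContDiffOn ℝ (⊤ : ℕ∞) a Ω) (hb : ContDiffOn ℝ (⊤ : ℕ∞) b Ω)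
    (hU : ContDiffOn ℝ (⊤ : ℕ∞) U Ω) (hh : ContDiffOn ℝ (⊤ : ℕ∞) h Ω)
    (hhpos : ∀ z ∈ Ω, 0 < h z)
    (hW : ∀ z ∈ Ω, U z - Bf a b h z ≠ 0)
    (ψ : ℂ → ℂ) (hψ : ContDiffOn ℝ (⊤ : ℕ∞) ψ Ω)
    (heq : ∀ z ∈ Ω,
      -4 * (h z : ℂ)^2 * cdb a b (fun w => cd a b ψ w) z
        + ((U z - Bf a b h z : ℝ) : ℂ) * ψ z = 0) :
    let WC : ℂ → ℂ := fun w => ((U w - Bf a b h w : ℝ) : ℂ)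
    let hC : ℂ → ℂ := fun w => ((h w : ℝ) : ℂ)
    let tcd : (ℂ → ℂ) → ℂ → ℂ := fun φ w =>
      cd a b φ w - (wd WC w / WC w) * φ w + 2 * (wd hC w / hC w) * φ w
    let ψt : ℂ → ℂ := fun w => cd a b ψ w
    ∀ z ∈ Ω,
      -4 * (h z : ℂ)^2 * tcd (fun w => cdb a b ψt w) z + WC z * ψt z = 0 := by
  intro WC hC tcd ψt z hz
  have hΩz := hΩ.mem_nhds hz
  have dh : DifferentiableAt ℝ h z := (hh.contDiffAt hΩz).differentiableAt (by simp)
  have dW : DifferentiableAt ℝ WC z :=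
    (((hU.contDiffAt hΩz).differentiableAt (by simp)).sub (differentiableAt_Bf
      ((ha.contDiffAt hΩz).of_le (WithTop.coe_le_coe.2 le_top))
      ((hb.contDiffAt hΩz).of_le (WithTop.coe_le_coe.2 le_top)) dh)).ofReal_comp
  have hzero : (fun w => 4 * hC w ^ 2 * cdb a b ψt w) =ᶠ[𝓝 z] fun w => WC w * ψ w := by
    filter_upwards [hΩz] with w hw
    linear_combination -heq w hw
  show -4 * hC z ^ 2 * (wd (cdb a b ψt) z - I * ((a z - I * b z) / 2) * cdb a b ψt z
      - wd WC z / WC z * cdb a b ψt z + 2 * (wd hC z / hC z) * cdb a b ψt z)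
    + WC z * (wd ψ z - I * ((a z - I * b z) / 2) * ψ z) = 0
  exact twisted_zero_mode_of_eventuallyEq _ (ofReal_ne_zero.2 (hW z hz))
    (eventually_of_mem hΩz fun w hw => ofReal_ne_zero.2 (hhpos w hw).ne') dW dh.ofReal_comp
    ((hψ.contDiffAt hΩz).differentiableAt (by simp)) hzero
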